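/- There exist a bounded sequence {v_j}_{j∈ℤ}, a ρ-lacunary sequence {a_j}_{j∈ℤ} (for some ρ > 1), and a function f ∈ L^∞(ℝ) such that the maximal differential transform T* f(t) = sup_{N₁<N₂} |Σ_{j=N₁}^{N₂} v_j (P^α_{a_{j+1}} f(t) − P^α_{a_j} f(t))| equals +∞ for every t ∈ ℝ. -/

import Mathlib

/-!
Subordination: `P^α_τ f(t) = 𝔼 f(t - τ² Y)` where `Y = 1/(4X)` and `X ∼ Γ(α, 1)`; this is the
substitution `s = τ²/(4x)` in the defining integral.

Let `f` be the alternating block function of ratio `A`. It satisfies `f(A^{2j} x) = (-1)^j f(x)`,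
so `(-1)^j P^α_{A^j} f(t) = 𝔼 f(s - Y)` with `s = t / A^{2j}`, and `|s| ≤ 1/A` once `j` is large.
For such `s`, `f(s - Y) = 1` when `Y ∈ [2, 3]` and `f(s - Y) ≥ 0` when `Y ∈ [2/A, A)`, hence
`(-1)^j P^α_{A^j} f(t) ≥ ℙ(Y ∈ [2, 3]) - ℙ(Y ∉ [2/A, A)) =: δ`, and `δ > 0` for `A` large since
`Y > 0` almost surely and `ℙ(Y ∈ [2, 3]) > 0`. With `v_j = (-1)^{j+1}` every term
`v_j (P_{A^{j+1}} f(t) - P_{A^j} f(t)) = (-1)^{j+1} P_{A^{j+1}} f(t) + (-1)^j P_{A^j} f(t)` is then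
eventually at least `2δ`, so the partial sums are unbounded.
-/

section

open Real MeasureTheory Finset

/-- The one-sided fractional Poisson-type operator. -/
noncomputable def fracPoisson (α τ : ℝ) (f : ℝ → ℝ) (t : ℝ) : ℝ :=
  (1 / (4 ^ α * Real.Gamma α)) *
    ∫ s in Set.Ioi (0:ℝ), τ ^ (2 * α) * Real.exp (-τ ^ 2 / (4 * s)) / s ^ (1 + α) * f (t - s)

end

open Real MeasureTheory ProbabilityTheory Set Filter Topology

/-- `∑ₖ (-1)ᵏ 𝟙_{(-A^{2k+1}, -A^{2k}]}`: a point `x < 0` lies in the `k`-th block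
iff `⌊logb A (-x)⌋ = 2k`. -/
noncomputable def alternatingBlocks (A x : ℝ) : ℝ :=
  if x < 0 ∧ Even ⌊logb A (-x)⌋ then (-1 : ℝ) ^ (⌊logb A (-x)⌋ / 2) else 0

lemma abs_alternatingBlocks_le_one (A x : ℝ) : |alternatingBlocks A x| ≤ 1 := by
  unfold alternatingBlocks
  split_ifs
  · rw [abs_zpow, abs_neg, abs_one, one_zpow]
  · simp

lemma measurable_alternatingBlocks (A : ℝ) : Measurable (alternatingBlocks A) := by
  have hfloor : Measurable fun x : ℝ => ⌊logb A (-x)⌋ :=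
    ((measurable_log.comp measurable_neg).div_const _).floor
  refine .ite ?_ ((measurable_from_top (f := fun m : ℤ => (-1 : ℝ) ^ (m / 2))).comp hfloor)
    measurable_const
  exact measurableSet_Iio.inter (hfloor (MeasurableSet.of_discrete (s := {m : ℤ | Even m})))

lemma alternatingBlocks_zpow_mul {A : ℝ} (hA : 1 < A) (j : ℤ) (x : ℝ) :
    alternatingBlocks A (A ^ (2 * j) * x) = (-1) ^ j * alternatingBlocks A x := by
  have hA0 : 0 < A := zero_lt_one.trans hA
  rcases lt_or_ge x 0 with hx | hx
  · have hlog : logb A (-(A ^ (2 * j) * x)) = ((2 * j : ℤ) : ℝ) + logb A (-x) := by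
      rw [← mul_neg, logb_mul (zpow_pos hA0 _).ne' (by linarith), ← rpow_intCast,
        logb_rpow hA0 hA.ne']
    have hneg : A ^ (2 * j) * x < 0 := mul_neg_of_pos_of_neg (zpow_pos hA0 _) hx
    simp only [alternatingBlocks, hlog, Int.floor_intCast_add, hx, hneg, true_and,
      Int.even_add, even_two_mul, true_iff]
    split_ifs
    · rw [Int.add_ediv_of_dvd_left (dvd_mul_right 2 j), Int.mul_ediv_cancel_left _ two_ne_zero,
        zpow_add₀ (by norm_num)]
    · rw [mul_zero]
  · have hnonneg : ¬ A ^ (2 * j) * x < 0 := not_lt.2 (mul_nonneg (zpow_pos hA0 _).le hx)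
    simp [alternatingBlocks, hnonneg, not_lt.2 hx]

lemma alternatingBlocks_neg_eq_one {A u : ℝ} (hA : 1 < A) (h1 : 1 ≤ u) (h2 : u < A) :
    alternatingBlocks A (-u) = 1 := by
  have hfloor : ⌊logb A u⌋ = 0 := Int.floor_eq_zero_iff.2
    ⟨logb_nonneg hA h1, (logb_lt_iff_lt_rpow hA (by linarith)).2 (by rwa [rpow_one])⟩
  simp [alternatingBlocks, hfloor, show 0 < u by linarith]

lemma alternatingBlocks_neg_nonneg {A u : ℝ} (hA : 1 < A) (h1 : A⁻¹ ≤ u) (h2 : u < A ^ 2) :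
    0 ≤ alternatingBlocks A (-u) := by
  have hu : 0 < u := (inv_pos.2 (zero_lt_one.trans hA)).trans_le h1
  have hlo : -1 ≤ ⌊logb A u⌋ := by
    rwa [Int.le_floor, Int.cast_neg, Int.cast_one, le_logb_iff_rpow_le hA hu, rpow_neg_one]
  have hhi : ⌊logb A u⌋ ≤ 1 := by
    rw [Int.floor_le_iff, logb_lt_iff_lt_rpow hA hu]
    norm_num
    exact h2
  unfold alternatingBlocks
  split_ifs with h
  · obtain ⟨-, k, hk⟩ := h
    rw [neg_neg] at hk
    have hzero : ⌊logb A u⌋ = 0 := by omega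
    simp [hzero]
  · exact le_rfl

lemma integral_gammaMeasure {a r : ℝ} (ha : 0 < a) (hr : 0 < r) (g : ℝ → ℝ) :
    ∫ x, g x ∂gammaMeasure a r =
      ∫ x in Ioi 0, r ^ a / Gamma a * x ^ (a - 1) * exp (-(r * x)) * g x := by
  rw [gammaMeasure, integral_withDensity_eq_integral_toReal_smul (f := gammaPDF a r)
      (measurable_gammaPDFReal a r).ennreal_ofReal (ae_of_all _ fun _ => ENNReal.ofReal_lt_top),
    ← setIntegral_eq_integral_of_forall_compl_eq_zero (s := Ici 0), integral_Ici_eq_integral_Ioi]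
  · refine setIntegral_congr_fun measurableSet_Ioi fun x (hx : 0 < x) => ?_
    rw [gammaPDF, ENNReal.toReal_ofReal (gammaPDFReal_nonneg ha hr x), gammaPDFReal,
      if_pos hx.le, smul_eq_mul]
  · intro x (hx : ¬ 0 ≤ x)
    rw [gammaPDF_of_neg (not_le.1 hx), ENNReal.toReal_zero, zero_smul]

lemma fracPoisson_eq_integral_gammaMeasure {α τ : ℝ} (hα : 0 < α) (hτ : 0 < τ)
    (f : ℝ → ℝ) (t : ℝ) :
    fracPoisson α τ f t = ∫ x, f (t - τ ^ 2 * (4 * x)⁻¹) ∂gammaMeasure α 1 := by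
  set c : ℝ := τ ^ 2 / 4
  have hc : 0 < c := by positivity
  have hτc : τ ^ 2 = 4 * c := by ring
  set g : ℝ → ℝ := fun s => τ ^ (2 * α) * exp (-τ ^ 2 / (4 * s)) / s ^ (1 + α) * f (t - s)
  have hsubst : ∫ s in Ioi 0, g s = ∫ x in Ioi 0, c * x ^ (-2 : ℝ) * g (c * x⁻¹) := by
    have hscale := integral_comp_mul_left_Ioi' g 0 hc
    rw [mul_zero] at hscale
    rw [← hscale, ← integral_comp_rpow_Ioi (fun y : ℝ => g (c * y)) (by norm_num : (-1 : ℝ) ≠ 0),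
      smul_eq_mul, ← integral_const_mul (μ := volume.restrict (Ioi 0))]
    refine setIntegral_congr_fun measurableSet_Ioi fun x (hx : 0 < x) => ?_
    norm_num [rpow_neg_one]
    ring
  rw [fracPoisson, integral_gammaMeasure hα one_pos, hsubst, ← integral_const_mul]
  refine setIntegral_congr_fun measurableSet_Ioi fun x (hx : 0 < x) => ?_
  have hexp : τ ^ 2 / (4 * (c * x⁻¹)) = x := by rw [hτc]; field_simp
  have hden : (c * x⁻¹) ^ (1 + α) = c * c ^ α * x⁻¹ * x⁻¹ ^ α := by
    rw [mul_rpow hc.le (inv_nonneg.2 hx.le), rpow_one_add' hc.le (by positivity),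
      rpow_one_add' (inv_nonneg.2 hx.le) (by positivity)]
    ring
  have hnum : τ ^ (2 * α) = 4 ^ α * c ^ α := by
    rw [← mul_rpow (by norm_num) hc.le, rpow_mul hτ.le, rpow_two, hτc]
  have hxα : x ^ (α - 1) = x ^ α * x⁻¹ := by rw [rpow_sub_one hx.ne', div_eq_mul_inv]
  have hx2 : x ^ (-2 : ℝ) = x⁻¹ * x⁻¹ := by
    rw [rpow_neg hx.le, show (2 : ℝ) = (2 : ℕ) by norm_num, rpow_natCast, sq, mul_inv]
  have := Gamma_pos_of_pos hα
  simp only [g, hexp, neg_div, hden, hnum, hxα, hx2, inv_rpow hx.le, one_rpow, one_mul]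
  field_simp
  rw [hτc]
  congr 1
  field_simp

noncomputable def fracPoissonLaw (α : ℝ) : Measure ℝ :=
  (gammaMeasure α 1).map fun x => (4 * x)⁻¹

lemma isProbabilityMeasure_fracPoissonLaw {α : ℝ} (hα : 0 < α) :
    IsProbabilityMeasure (fracPoissonLaw α) :=
  have := isProbabilityMeasure_gammaMeasure hα one_pos
  Measure.isProbabilityMeasure_map (by fun_prop)

lemma fracPoisson_eq_integral_fracPoissonLaw {α τ : ℝ} (hα : 0 < α) (hτ : 0 < τ) {f : ℝ → ℝ}
    (hf : Measurable f) (t : ℝ) :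
    fracPoisson α τ f t = ∫ y, f (t - τ ^ 2 * y) ∂fracPoissonLaw α := by
  rw [fracPoisson_eq_integral_gammaMeasure hα hτ, fracPoissonLaw,
    integral_map (f := fun y => f (t - τ ^ 2 * y)) (by fun_prop)
      (hf.comp (by fun_prop)).aestronglyMeasurable]

lemma fracPoissonLaw_Iic_zero (α : ℝ) : fracPoissonLaw α (Iic 0) = 0 := by
  have hpre : (fun x : ℝ => (4 * x)⁻¹) ⁻¹' Iic 0 = Iic 0 := by
    ext x
    simp only [mem_preimage, mem_Iic, inv_nonpos]
    constructor <;> intro <;> linarith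
  rw [fracPoissonLaw, Measure.map_apply (by fun_prop) measurableSet_Iic, hpre, gammaMeasure,
    withDensity_apply _ measurableSet_Iic, setLIntegral_congr Iio_ae_eq_Iic.symm,
    lintegral_gammaPDF_of_nonpos le_rfl]

lemma fracPoissonLaw_Icc_pos {α : ℝ} (hα : 0 < α) : 0 < fracPoissonLaw α (Icc 2 3) := by
  have hpre : Icc (1 / 12) (1 / 8) ⊆ (fun x : ℝ => (4 * x)⁻¹) ⁻¹' Icc 2 3 := by
    rintro x ⟨h1, h2⟩
    constructor
    · rw [le_inv_comm₀ (by norm_num) (by linarith)]; linarith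
    · rw [inv_le_comm₀ (by linarith) (by norm_num)]; linarith
  refine (pos_iff_ne_zero.2 ?_).trans_le ((measure_mono hpre).trans_eq
    (Measure.map_apply (by fun_prop) measurableSet_Icc).symm)
  rw [gammaMeasure, Ne, withDensity_apply_eq_zero' (f := gammaPDF α 1)
    (measurable_gammaPDFReal α 1).ennreal_ofReal.aemeasurable]
  have hsupp : {x | gammaPDF α 1 x ≠ 0} ∩ Icc (1 / 12) (1 / 8) = Icc (1 / 12) (1 / 8) := by
    refine inter_eq_right.2 fun x hx => ?_
    simpa [gammaPDF] using gammaPDFReal_pos hα one_pos (by linarith [hx.1] : (0 : ℝ) < x)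
  rw [hsupp, Real.volume_Icc]
  norm_num

lemma tendsto_measure_compl_Ico_div {ν : Measure ℝ} [IsFiniteMeasure ν] (h0 : ν (Iic 0) = 0)
    {c : ℝ} (hc : 0 < c) : Tendsto (fun A => ν (Ico (c / A) A)ᶜ) atTop (𝓝 0) := by
  have hIci : Tendsto (ν ∘ Ici) atTop (𝓝 0) := by
    have hempty : ⋂ A : ℝ, Ici A = ∅ := by
      ext x; simpa using ⟨x + 1, by linarith⟩
    simpa [hempty] using tendsto_measure_iInter_atTop (μ := ν)
      (fun _ => measurableSet_Ici.nullMeasurableSet) antitone_Ici ⟨0, measure_ne_top ν _⟩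
  have hIio : Tendsto (ν ∘ Iio) (𝓝[>] 0) (𝓝 0) := by
    have hIic : ⋂ r > (0 : ℝ), Iio r = Iic 0 := by
      ext x; simp [forall_gt_iff_le]
    simpa [hIic, h0] using tendsto_measure_biInter_gt (μ := ν) (s := Iio) (a := (0 : ℝ))
      (fun _ _ => measurableSet_Iio.nullMeasurableSet) (fun _ _ _ hij => Iio_subset_Iio hij)
      ⟨1, one_pos, measure_ne_top ν _⟩
  have hdiv : Tendsto (fun A : ℝ => c / A) atTop (𝓝[>] 0) :=
    tendsto_nhdsWithin_iff.2 ⟨tendsto_const_nhds.div_atTop tendsto_id,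
      (eventually_gt_atTop 0).mono fun A hA => div_pos hc hA⟩
  refine tendsto_of_tendsto_of_tendsto_of_le_of_le tendsto_const_nhds
    (by simpa using (hIio.comp hdiv).add hIci) (fun _ => bot_le) fun A => ?_
  refine (measure_mono fun x hx => ?_).trans (measure_union_le (Iio (c / A)) (Ici A))
  simpa only [mem_compl_iff, mem_Ico, not_and_or, not_le, not_lt, mem_union, mem_Iio, mem_Ici]
    using hx

lemma measureReal_sub_measureReal_compl_le_integral {X : Type*} [MeasurableSpace X]
    {μ : Measure X} [IsFiniteMeasure μ] {g : X → ℝ} (hg : Measurable g) (hg1 : ∀ x, |g x| ≤ 1)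
    {G W : Set X} (hG : MeasurableSet G) (hW : MeasurableSet W) (hGg : ∀ x ∈ G, g x = 1)
    (hWg : ∀ x ∈ W, 0 ≤ g x) :
    μ.real G - μ.real Wᶜ ≤ ∫ x, g x ∂μ := by
  have hpt : ∀ x, G.indicator 1 x - Wᶜ.indicator 1 x ≤ g x := by
    intro x
    by_cases hxG : x ∈ G
    · rw [indicator_of_mem hxG, hGg x hxG, Pi.one_apply]
      exact sub_le_self 1 (indicator_nonneg (f := 1) (fun _ _ => zero_le_one) x)
    by_cases hxW : x ∈ W
    · simpa [hxG, hxW] using hWg x hxW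
    · simpa [hxG, hxW] using (abs_le.1 (hg1 x)).1
  have hGi : Integrable (G.indicator (1 : X → ℝ)) μ := (integrable_const 1).indicator hG
  have hWi : Integrable (Wᶜ.indicator (1 : X → ℝ)) μ := (integrable_const 1).indicator hW.compl
  rw [← integral_indicator_one hG, ← integral_indicator_one hW.compl, ← integral_sub hGi hWi]
  exact integral_mono (hGi.sub hWi) (.of_bound hg.aestronglyMeasurable 1 (ae_of_all _ hg1)) hpt

lemma measureReal_sub_le_integral_alternatingBlocks {ν : Measure ℝ} [IsFiniteMeasure ν]
    {A s : ℝ} (hA : 4 ≤ A) (hs : |s| ≤ A⁻¹) :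
    ν.real (Icc 2 3) - ν.real (Ico (2 / A) A)ᶜ ≤ ∫ y, alternatingBlocks A (s - y) ∂ν := by
  have hA1 : 1 < A := by linarith
  have hsA : A⁻¹ ≤ 4⁻¹ := inv_anti₀ (by norm_num) hA
  obtain ⟨hs1, hs2⟩ := abs_le.1 hs
  refine measureReal_sub_measureReal_compl_le_integral (g := fun y => alternatingBlocks A (s - y))
    ((measurable_alternatingBlocks A).comp (measurable_const.sub measurable_id))
    (fun y => abs_alternatingBlocks_le_one A _) measurableSet_Icc measurableSet_Ico
    (fun y ⟨hy2, hy3⟩ => ?_) (fun y ⟨hyl, hyr⟩ => ?_) <;> rw [← neg_sub]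
  · exact alternatingBlocks_neg_eq_one hA1 (by linarith) (by linarith)
  · rw [div_eq_mul_inv] at hyl
    exact alternatingBlocks_neg_nonneg hA1 (by linarith) (by nlinarith)

lemma le_neg_one_zpow_mul_fracPoisson {α A t : ℝ} (hα : 0 < α) (hA : 4 ≤ A) {j : ℤ}
    (ht : |t| * A ≤ A ^ (2 * j)) :
    (fracPoissonLaw α).real (Icc 2 3) - (fracPoissonLaw α).real (Ico (2 / A) A)ᶜ ≤
      (-1) ^ j * fracPoisson α (A ^ j) (alternatingBlocks A) t := by
  have := isProbabilityMeasure_fracPoissonLaw hα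
  have hA0 : 0 < A := by linarith
  have hpow : 0 < A ^ (2 * j) := zpow_pos hA0 _
  have hsign : ∀ y, (-1) ^ j * alternatingBlocks A (t - (A ^ j) ^ 2 * y) =
      alternatingBlocks A (t / A ^ (2 * j) - y) := by
    intro y
    rw [← zpow_natCast, ← zpow_mul, Nat.cast_ofNat, mul_comm j,
      show t - A ^ (2 * j) * y = A ^ (2 * j) * (t / A ^ (2 * j) - y) by field_simp,
      alternatingBlocks_zpow_mul (by linarith), ← mul_assoc, ← mul_zpow]
    norm_num
  rw [fracPoisson_eq_integral_fracPoissonLaw hα (zpow_pos hA0 j) (measurable_alternatingBlocks A),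
    ← integral_const_mul]
  simp_rw [hsign]
  refine measureReal_sub_le_integral_alternatingBlocks hA ?_
  rwa [abs_div, abs_of_pos hpow, div_le_iff₀ hpow, inv_mul_eq_div, le_div_iff₀ hA0]

lemma eventually_le_neg_one_zpow_mul_fracPoisson {α A : ℝ} (hα : 0 < α) (hA : 4 ≤ A) (t : ℝ) :
    ∀ᶠ j : ℤ in atTop,
      (fracPoissonLaw α).real (Icc 2 3) - (fracPoissonLaw α).real (Ico (2 / A) A)ᶜ ≤
        (-1) ^ j * fracPoisson α (A ^ j) (alternatingBlocks A) t := by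
  obtain ⟨n, hn⟩ := pow_unbounded_of_one_lt (|t| * A) (by linarith : (1 : ℝ) < A)
  filter_upwards [eventually_ge_atTop (n : ℤ)] with j hj
  refine le_neg_one_zpow_mul_fracPoisson hα hA (hn.le.trans ?_)
  rw [← zpow_natCast]
  exact zpow_le_zpow_right₀ (by linarith) (by omega)

lemma exists_lt_abs_sum_Icc_of_eventually_le {u : ℤ → ℝ} {c : ℝ} (hc : 0 < c)
    (hu : ∀ᶠ j in atTop, c ≤ u j) (R : ℝ) :
    ∃ N₁ N₂ : ℤ, N₁ < N₂ ∧ R < |∑ j ∈ Finset.Icc N₁ N₂, u j| := by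
  obtain ⟨N, hN⟩ := eventually_atTop.1 hu
  obtain ⟨m, hm⟩ := exists_nat_gt (R / c)
  refine ⟨N, N + m + 1, by omega, ?_⟩
  have hsum := Finset.card_nsmul_le_sum (Finset.Icc N (N + m + 1)) u c
    fun j hj => hN j (Finset.mem_Icc.1 hj).1
  rw [Int.card_Icc, show N + m + 1 + 1 - N = (m + 2 : ℕ) by omega, Int.toNat_natCast,
    nsmul_eq_mul] at hsum
  calc R < m * c := (div_lt_iff₀ hc).1 hm
    _ ≤ ((m + 2 : ℕ) : ℝ) * c := by gcongr; linarith
    _ ≤ _ := hsum.trans (le_abs_self _)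

theorem stmt_13_general (α : ℝ) (hα0 : 0 < α) :
    ∃ ρ > (1:ℝ), ∃ (a v : ℤ → ℝ) (f : ℝ → ℝ),
      (∀ j, 0 < a j) ∧ (∀ j, ρ ≤ a (j + 1) / a j) ∧
      (∃ V, ∀ j, |v j| ≤ V) ∧
      Measurable f ∧ (∃ M, ∀ t, |f t| ≤ M) ∧
      ∀ t : ℝ, ∀ R : ℝ, ∃ N₁ N₂ : ℤ, N₁ < N₂ ∧
        R < |∑ j ∈ Finset.Icc N₁ N₂,
              v j * (fracPoisson α (a (j + 1)) f t - fracPoisson α (a j) f t)| := by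
  have := isProbabilityMeasure_fracPoissonLaw hα0
  obtain ⟨A, hA, hA4⟩ := (((tendsto_measure_compl_Ico_div (fracPoissonLaw_Iic_zero α)
    two_pos).eventually (gt_mem_nhds (fracPoissonLaw_Icc_pos hα0))).and
    (eventually_ge_atTop 4)).exists
  set δ := (fracPoissonLaw α).real (Icc 2 3) - (fracPoissonLaw α).real (Ico (2 / A) A)ᶜ
  have hδ : 0 < δ :=
    sub_pos.2 ((ENNReal.toReal_lt_toReal (measure_ne_top _ _) (measure_ne_top _ _)).2 hA)
  have hA0 : 0 < A := by linarith
  refine ⟨A, by linarith, (A ^ ·), fun j => (-1) ^ (j + 1), alternatingBlocks A,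
    fun j => zpow_pos hA0 j, fun j => ?_, ⟨1, fun j => by simp⟩, measurable_alternatingBlocks A,
    ⟨1, abs_alternatingBlocks_le_one A⟩,
    fun t => exists_lt_abs_sum_Icc_of_eventually_le (mul_pos two_pos hδ) ?_⟩
  · beta_reduce
    rw [zpow_add_one₀ hA0.ne', mul_div_cancel_left₀ _ (zpow_ne_zero _ hA0.ne')]
  have hterm := eventually_le_neg_one_zpow_mul_fracPoisson hα0 hA4 t
  filter_upwards [hterm, (tendsto_atTop_add_const_right atTop 1 tendsto_id).eventually hterm]
    with j h₀ h₁
  rw [id] at h₁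
  calc 2 * δ ≤ (-1) ^ (j + 1) * fracPoisson α (A ^ (j + 1)) (alternatingBlocks A) t
        + (-1) ^ j * fracPoisson α (A ^ j) (alternatingBlocks A) t := by linarith
    _ = _ := by rw [zpow_add_one₀ (by norm_num : (-1 : ℝ) ≠ 0)]; ring

theorem stmt_13 (α : ℝ) (hα0 : 0 < α) (hα1 : α < 1) :
    ∃ ρ > (1:ℝ), ∃ (a v : ℤ → ℝ) (f : ℝ → ℝ),
      (∀ j, 0 < a j) ∧ (∀ j, ρ ≤ a (j + 1) / a j) ∧
      (∃ V, ∀ j, |v j| ≤ V) ∧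
      Measurable f ∧ (∃ M, ∀ t, |f t| ≤ M) ∧
      ∀ t : ℝ, ∀ R : ℝ, ∃ N₁ N₂ : ℤ, N₁ < N₂ ∧
        R < |∑ j ∈ Finset.Icc N₁ N₂,
              v j * (fracPoisson α (a (j + 1)) f t - fracPoisson α (a j) f t)| :=
  stmt_13_general α hα0
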